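/- (Observation (2) of §6.2: localized tangent vector fields with prescribed electric and magnetic mode-1 moments.) For every nonempty open subset U ⊆ S² there exist a constant C > 0 and a linear map Ψ: ℝ⁶ → (maps S² → ℝ³) such that for every (α₁,α₂,α₃,β₁,β₂,β₃) ∈ ℝ⁶ the field X := Ψ(α,β) is a smooth tangent vector field on S², has support contained in U, satisfies the electric moment conditions ∫_{S²} ⟨X, Eₘ⟩ dσ = αₘ and the magnetic moment conditions ∫_{S²} ⟨X, Hₘ⟩ dσ = βₘ for m = 1,2,3, and is bounded by sup_{S²} ‖X‖ ≤ C·max_{m}(|αₘ|, |βₘ|). -/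

import Mathlib

open MeasureTheory Metric
open scoped Manifold

noncomputable section

instance : Fact (Module.finrank ℝ (EuclideanSpace ℝ (Fin 3)) = 2 + 1) := ⟨by simp⟩

/-- The unit sphere `S²` in Euclidean `ℝ³`. -/
abbrev UnitSphere : Type := Metric.sphere (0 : EuclideanSpace ℝ (Fin 3)) 1

/-- The standard surface measure `σ` on `S²`. -/
def sphereMeasure : Measure UnitSphere :=
  (volume : Measure (EuclideanSpace ℝ (Fin 3))).toSphere

/-- The standard basis vectors `e₁, e₂, e₃` of `ℝ³`. -/
def stdBasis (m : Fin 3) : EuclideanSpace ℝ (Fin 3) := EuclideanSpace.single m 1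

/-- The cross product on Euclidean `ℝ³`. -/
def cross3 (x y : EuclideanSpace ℝ (Fin 3)) : EuclideanSpace ℝ (Fin 3) :=
  WithLp.toLp 2 ![x 1 * y 2 - x 2 * y 1, x 2 * y 0 - x 0 * y 2, x 0 * y 1 - x 1 * y 0]

/-- The electric mode-1 tangent fields `Eₘ(x) := eₘ - ⟨x,eₘ⟩·x`. -/
def Efield (m : Fin 3) (x : EuclideanSpace ℝ (Fin 3)) : EuclideanSpace ℝ (Fin 3) :=
  stdBasis m - (inner ℝ x (stdBasis m) : ℝ) • x

/-- The magnetic mode-1 tangent fields `Hₘ(x) := x × eₘ`. -/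
def Hfield (m : Fin 3) (x : EuclideanSpace ℝ (Fin 3)) : EuclideanSpace ℝ (Fin 3) :=
  cross3 x (stdBasis m)

/-!
Fix a smooth bump `φ ≥ 0` on the sphere supported in `U` and look for `X` of the form
`φ • ∑ⱼ cⱼ Aⱼ`, where `Aⱼ` runs over the six fields `Eₘ`, `Hₘ`. The moments of such an `X` are
`G c` for the weighted Gram matrix `Gᵢⱼ = ∫ φ ⟪Aⱼ, Aᵢ⟫ dσ`, and `c ⬝ G c = ∫ φ ‖∑ⱼ cⱼ Aⱼ‖² dσ`.
Since `∑ₘ αₘ Eₘ(x) + ∑ₘ βₘ Hₘ(x) = a - ⟪x, a⟫ x + x × b` can vanish at three distinct points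
of the sphere only if `a = b = 0`, and the open set `{φ ≠ 0}` is infinite, `G` is invertible;
take `Ψ p := φ • ∑ⱼ (G⁻¹ p)ⱼ Aⱼ`. The sup bound holds for any linear map from a
finite-dimensional space to continuous functions on a compact space.
-/

open Set Function
open scoped Matrix ContDiff

local notation "ℝ³" => EuclideanSpace ℝ (Fin 3)

theorem LinearMap.exists_pos_bound_of_continuous_apply {V X F : Type*} [NormedAddCommGroup V]
    [NormedSpace ℝ V] [FiniteDimensional ℝ V] [TopologicalSpace X] [CompactSpace X]
    [NormedAddCommGroup F] [NormedSpace ℝ F] (Ψ : V →ₗ[ℝ] X → F) (hΨ : ∀ v, Continuous (Ψ v)) :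
    ∃ C > 0, ∀ v x, ‖Ψ v x‖ ≤ C * ‖v‖ := by
  let Φ : V →ₗ[ℝ] C(X, F) :=
    { toFun v := ⟨Ψ v, hΨ v⟩
      map_add' v w := by ext; simp
      map_smul' c v := by ext; simp }
  let T := LinearMap.toContinuousLinearMap Φ
  refine ⟨‖T‖ + 1, by positivity, fun v x => ?_⟩
  calc ‖Ψ v x‖ = ‖Φ v x‖ := rfl
    _ ≤ ‖Φ v‖ := (Φ v).norm_coe_le_norm x
    _ ≤ ‖T‖ * ‖v‖ := T.le_opNorm v
    _ ≤ (‖T‖ + 1) * ‖v‖ := by gcongr; linarith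

section LocalizedCombination

variable {X F ι : Type*} [NormedAddCommGroup F] [InnerProductSpace ℝ F] [Fintype ι]
  {A : ι → X → F} {φ : X → ℝ}

def localizedCombination (φ : X → ℝ) (A : ι → X → F) : (ι → ℝ) →ₗ[ℝ] X → F :=
  Fintype.linearCombination ℝ fun j x => φ x • A j x

theorem localizedCombination_apply (c : ι → ℝ) (x : X) :
    localizedCombination φ A c x = φ x • ∑ j, c j • A j x := by
  simp [localizedCombination, Fintype.linearCombination_apply, Finset.smul_sum, smul_comm (c _)]

variable [TopologicalSpace X]

theorem continuous_localizedCombination (hA : ∀ j, Continuous (A j)) (hφ : Continuous φ)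
    (c : ι → ℝ) : Continuous (localizedCombination φ A c) := by
  simp_rw [funext (localizedCombination_apply (φ := φ) (A := A) c)]
  fun_prop

theorem tsupport_localizedCombination_subset (c : ι → ℝ) :
    tsupport (localizedCombination φ A c) ⊆ tsupport φ := by
  simp_rw [funext (localizedCombination_apply (φ := φ) (A := A) c)]
  exact tsupport_smul_subset_left _ _

variable [CompactSpace X] [MeasurableSpace X] [OpensMeasurableSpace X] {μ : Measure X}
  [IsFiniteMeasure μ]

def weightedGram (μ : Measure X) (φ : X → ℝ) (A : ι → X → F) : Matrix ι ι ℝ :=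
  Matrix.of fun i j => ∫ x, φ x * inner ℝ (A j x) (A i x) ∂μ

theorem integral_inner_localizedCombination (hA : ∀ j, Continuous (A j)) (hφ : Continuous φ)
    (c : ι → ℝ) (i : ι) :
    ∫ x, inner ℝ (localizedCombination φ A c x) (A i x) ∂μ = (weightedGram μ φ A *ᵥ c) i := by
  have hint : ∀ j, Integrable (fun x => φ x * inner ℝ (A j x) (A i x)) μ := fun j =>
    Continuous.integrable_of_hasCompactSupport (by fun_prop) (.of_compactSpace _)
  have hpt : ∀ x, inner ℝ (localizedCombination φ A c x) (A i x)
      = ∑ j, c j * (φ x * inner ℝ (A j x) (A i x)) := fun x => by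
    simp only [localizedCombination_apply, real_inner_smul_left, sum_inner, Finset.mul_sum]
    congr 1 with j
    ring
  simp only [hpt]
  rw [integral_finsetSum _ fun j _ => (hint j).const_mul (c j)]
  simp only [integral_const_mul, Matrix.mulVec, dotProduct, weightedGram, Matrix.of_apply, mul_comm]

theorem dotProduct_weightedGram_mulVec (hA : ∀ j, Continuous (A j)) (hφ : Continuous φ)
    (c : ι → ℝ) :
    c ⬝ᵥ (weightedGram μ φ A *ᵥ c) = ∫ x, φ x * ‖∑ j, c j • A j x‖ ^ 2 ∂μ := by
  have hint : ∀ i, Integrable (fun x => c i * inner ℝ (localizedCombination φ A c x) (A i x)) μ :=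
    fun i => Continuous.integrable_of_hasCompactSupport
      (by have := continuous_localizedCombination hA hφ c; fun_prop) (.of_compactSpace _)
  simp only [dotProduct, ← integral_inner_localizedCombination hA hφ, ← integral_const_mul]
  rw [← integral_finsetSum _ fun i _ => hint i]
  congr 1 with x
  simp only [← real_inner_smul_right, ← inner_sum]
  rw [localizedCombination_apply, real_inner_smul_left, real_inner_self_eq_norm_sq]

theorem weightedGram_mulVec_injective [μ.IsOpenPosMeasure] (hA : ∀ j, Continuous (A j))
    (hφ : Continuous φ) (hφ0 : 0 ≤ φ)
    (hind : ∀ c : ι → ℝ, (∀ x, φ x ≠ 0 → ∑ j, c j • A j x = 0) → c = 0) :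
    Injective (weightedGram μ φ A).mulVec := by
  refine (injective_iff_map_eq_zero (weightedGram μ φ A).mulVecLin).2 fun c hc =>
    hind c fun x hx => ?_
  by_contra hY
  have hpos : 0 < ∫ x, φ x * ‖∑ j, c j • A j x‖ ^ 2 ∂μ :=
    integral_pos_of_integrable_nonneg_nonzero (x := x) (by fun_prop)
      (Continuous.integrable_of_hasCompactSupport (by fun_prop) (.of_compactSpace _))
      (fun x => mul_nonneg (hφ0 x) (sq_nonneg _))
      (mul_ne_zero hx (pow_ne_zero 2 (norm_ne_zero_iff.2 hY)))
  rw [← dotProduct_weightedGram_mulVec hA hφ, ← Matrix.mulVecLin_apply, hc, dotProduct_zero] at hpos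
  exact hpos.false

theorem exists_linearMap_integral_inner_localizedCombination [μ.IsOpenPosMeasure]
    (hA : ∀ j, Continuous (A j)) (hφ : Continuous φ) (hφ0 : 0 ≤ φ)
    (hind : ∀ c : ι → ℝ, (∀ x, φ x ≠ 0 → ∑ j, c j • A j x = 0) → c = 0) :
    ∃ L : (ι → ℝ) →ₗ[ℝ] ι → ℝ,
      ∀ p i, ∫ x, inner ℝ (localizedCombination φ A (L p) x) (A i x) ∂μ = p i := by
  let G := LinearEquiv.ofInjectiveEndo (weightedGram μ φ A).mulVecLin
    (weightedGram_mulVec_injective hA hφ hφ0 hind)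
  refine ⟨G.symm.toLinearMap, fun p i => ?_⟩
  rw [integral_inner_localizedCombination hA hφ]
  exact congrFun (G.apply_symm_apply p) i

end LocalizedCombination

theorem exists_contDiff_nonneg_tsupport_subset {E : Type*} [NormedAddCommGroup E]
    [NormedSpace ℝ E] [FiniteDimensional ℝ E] {S : Set E} {U : Set S} (hU : IsOpen U) {x₀ : S}
    (hx₀ : x₀ ∈ U) :
    ∃ φ : E → ℝ, ContDiff ℝ ∞ φ ∧ 0 ≤ φ ∧ tsupport (φ ∘ (↑)) ⊆ U ∧ φ x₀ ≠ 0 := by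
  obtain ⟨W, hW, rfl⟩ := isOpen_induced_iff.1 hU
  obtain ⟨φ, hφW, -, hφ, hφ01, hφx₀⟩ := exists_contDiff_tsupport_subset (n := ⊤) (hW.mem_nhds hx₀)
  exact ⟨φ, hφ, fun y => (hφ01 (mem_range_self y)).1,
    (tsupport_comp_subset_preimage φ continuous_subtype_val).trans (preimage_mono hφW),
    by simp [hφx₀]⟩

section ModeOne

theorem inner_eq_sum_three (x y : ℝ³) : inner ℝ x y = x 0 * y 0 + x 1 * y 1 + x 2 * y 2 := by
  simp [PiLp.inner_apply, Fin.sum_univ_three]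
  ring

theorem inner_cross3_self (u v : ℝ³) : inner ℝ (cross3 u v) u = 0 := by
  simp [inner_eq_sum_three, cross3]
  ring

theorem inner_cross3_cross3 (u v : ℝ³) :
    inner ℝ (cross3 u v) (cross3 u v) = inner ℝ u u * inner ℝ v v - inner ℝ u v ^ 2 := by
  simp only [inner_eq_sum_three]
  simp [cross3]
  ring

theorem cross3_zero_right (u : ℝ³) : cross3 u 0 = 0 := by
  ext i
  fin_cases i <;> simp [cross3]

def modeOneFamily : Fin 3 ⊕ Fin 3 → ℝ³ → ℝ³ := Sum.elim Efield Hfield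

def modeOneField (a b x : ℝ³) : ℝ³ := a - inner ℝ x a • x + cross3 x b

theorem sum_smul_modeOneFamily (c : Fin 3 ⊕ Fin 3 → ℝ) (x : ℝ³) :
    ∑ j, c j • modeOneFamily j x =
      modeOneField (WithLp.toLp 2 (c ∘ Sum.inl)) (WithLp.toLp 2 (c ∘ Sum.inr)) x := by
  ext i
  fin_cases i <;>
    simp [Fintype.sum_sum_type, Fin.sum_univ_three, modeOneFamily, modeOneField, Efield,
      Hfield, cross3, stdBasis, inner_eq_sum_three, PiLp.single_apply] <;> ring

theorem contDiff_modeOneFamily (j : Fin 3 ⊕ Fin 3) : ContDiff ℝ ∞ (modeOneFamily j) := by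
  rcases j with m | m
  · exact contDiff_const.sub ((contDiff_id.inner ℝ contDiff_const).smul contDiff_id)
  · rw [contDiff_piLp]
    intro i
    fin_cases i <;> simp [modeOneFamily, Hfield, cross3] <;> fun_prop

theorem inner_modeOneField_self (a b : ℝ³) {x : ℝ³} (hx : ‖x‖ = 1) :
    inner ℝ (modeOneField a b x) x = 0 := by
  rw [modeOneField, inner_add_left, inner_sub_left, real_inner_smul_left,
    real_inner_self_eq_norm_sq, hx, inner_cross3_self, real_inner_comm]
  ring

theorem modeOneField_sub_modeOneField (a b x y : ℝ³) :
    modeOneField a b x - modeOneField a b y =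
      inner ℝ y a • y - inner ℝ x a • x + cross3 (x - y) b := by
  ext i
  fin_cases i <;> simp [modeOneField, cross3] <;> ring

theorem modeOneField_neg_eq (a b x : ℝ³) :
    modeOneField b (-a) x = (1 - inner ℝ x x) • b - cross3 x (modeOneField a b x) := by
  ext i
  simp only [modeOneField, inner_eq_sum_three]
  fin_cases i <;> simp [cross3] <;> ring

variable {a b x y z : ℝ³}

theorem inner_add_inner_eq_zero_of_modeOneField_eq_zero (hx : ‖x‖ = 1) (hy : ‖y‖ = 1)
    (hxy : x ≠ y) (hX : modeOneField a b x = 0) (hY : modeOneField a b y = 0) :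
    inner ℝ x a + inner ℝ y a = 0 := by
  have h := congrArg (inner ℝ · (x - y)) (modeOneField_sub_modeOneField a b x y)
  rw [hX, hY, sub_zero, inner_zero_left, inner_add_left, inner_cross3_self, add_zero] at h
  simp only [inner_sub_left, inner_sub_right, real_inner_smul_left, real_inner_self_eq_norm_sq,
    hx, hy, real_inner_comm x y] at h
  have hlt : inner ℝ x y < 1 := by
    have := norm_sub_sq_real x y
    have := norm_pos_iff.2 (sub_ne_zero.2 hxy)
    nlinarith
  have : (inner ℝ x a + inner ℝ y a) * (1 - inner ℝ x y) = 0 := by linarith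
  exact (mul_eq_zero.1 this).resolve_right (by linarith)

theorem modeOneField_neg_eq_zero (hx : ‖x‖ = 1) (hX : modeOneField a b x = 0) :
    modeOneField b (-a) x = 0 := by
  rw [modeOneField_neg_eq, hX, cross3_zero_right, real_inner_self_eq_norm_sq, hx]
  simp

theorem inner_eq_zero_of_modeOneField_eq_zero (hx : ‖x‖ = 1) (hy : ‖y‖ = 1) (hz : ‖z‖ = 1)
    (hxy : x ≠ y) (hxz : x ≠ z) (hyz : y ≠ z) (hX : modeOneField a b x = 0)
    (hY : modeOneField a b y = 0) (hZ : modeOneField a b z = 0) : inner ℝ x a = 0 := by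
  have := inner_add_inner_eq_zero_of_modeOneField_eq_zero hx hy hxy hX hY
  have := inner_add_inner_eq_zero_of_modeOneField_eq_zero hx hz hxz hX hZ
  have := inner_add_inner_eq_zero_of_modeOneField_eq_zero hy hz hyz hY hZ
  linarith

theorem eq_zero_of_modeOneField_eq_zero (hx : ‖x‖ = 1) (hy : ‖y‖ = 1) (hz : ‖z‖ = 1)
    (hxy : x ≠ y) (hxz : x ≠ z) (hyz : y ≠ z) (hX : modeOneField a b x = 0)
    (hY : modeOneField a b y = 0) (hZ : modeOneField a b z = 0) : a = 0 ∧ b = 0 := by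
  have hxa := inner_eq_zero_of_modeOneField_eq_zero hx hy hz hxy hxz hyz hX hY hZ
  have hya := inner_eq_zero_of_modeOneField_eq_zero hy hx hz hxy.symm hyz hxz hY hX hZ
  have hxb := inner_eq_zero_of_modeOneField_eq_zero hx hy hz hxy hxz hyz
    (modeOneField_neg_eq_zero hx hX) (modeOneField_neg_eq_zero hy hY)
    (modeOneField_neg_eq_zero hz hZ)
  have hyb := inner_eq_zero_of_modeOneField_eq_zero hy hx hz hxy.symm hyz hxz
    (modeOneField_neg_eq_zero hy hY) (modeOneField_neg_eq_zero hx hX)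
    (modeOneField_neg_eq_zero hz hZ)
  have hcross : cross3 (x - y) b = 0 := by
    simpa [hX, hY, hxa, hya] using (modeOneField_sub_modeOneField a b x y).symm
  -- `b` is orthogonal to `x - y` and parallel to it, so it vanishes.
  have hb : b = 0 := by
    have h := inner_cross3_cross3 (x - y) b
    rw [hcross, inner_zero_left, real_inner_self_eq_norm_sq, real_inner_self_eq_norm_sq,
      inner_sub_left, hxb, hyb] at h
    have hxy' : ‖x - y‖ ≠ 0 := norm_ne_zero_iff.2 (sub_ne_zero.2 hxy)
    simpa [hxy'] using h
  refine ⟨?_, hb⟩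
  simpa [modeOneField, hxa, hb, cross3_zero_right] using hX

end ModeOne

section UnitSphere

instance : IsFiniteMeasure sphereMeasure :=
  inferInstanceAs (IsFiniteMeasure (volume : Measure ℝ³).toSphere)

instance : sphereMeasure.IsOpenPosMeasure :=
  inferInstanceAs ((volume : Measure ℝ³).toSphere.IsOpenPosMeasure)

instance : ConnectedSpace UnitSphere :=
  isConnected_iff_connectedSpace.1 <| isConnected_sphere
    (by rw [← Module.finrank_eq_rank, finrank_euclideanSpace_fin]; norm_num) 0 zero_le_one

instance : Nontrivial UnitSphere :=
  ⟨⟨⟨stdBasis 0, by simp [stdBasis]⟩, ⟨-stdBasis 0, by simp [stdBasis]⟩, fun h => by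
    have := congrArg (fun x : UnitSphere => (x : ℝ³) 0) h
    norm_num [stdBasis] at this⟩⟩

theorem eq_zero_of_sum_smul_modeOneFamily_eq_zero {N : Set UnitSphere} (hN : N.Infinite)
    {c : Fin 3 ⊕ Fin 3 → ℝ} (hc : ∀ x ∈ N, ∑ j, c j • modeOneFamily j x = 0) : c = 0 := by
  classical
  obtain ⟨t, htN, ht⟩ := hN.exists_subset_card_eq 3
  obtain ⟨x, y, z, hxy, hxz, hyz, rfl⟩ := Finset.card_eq_three.1 ht
  simp only [sum_smul_modeOneFamily] at hc
  obtain ⟨hl, hr⟩ := eq_zero_of_modeOneField_eq_zero (norm_eq_of_mem_sphere x)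
    (norm_eq_of_mem_sphere y) (norm_eq_of_mem_sphere z) (Subtype.coe_injective.ne hxy)
    (Subtype.coe_injective.ne hxz) (Subtype.coe_injective.ne hyz) (hc x (htN (by simp)))
    (hc y (htN (by simp))) (hc z (htN (by simp)))
  ext (i | i)
  · exact congrFun ((WithLp.toLp_eq_zero 2).1 hl) i
  · exact congrFun ((WithLp.toLp_eq_zero 2).1 hr) i

variable {φ : ℝ³ → ℝ}

theorem contMDiff_localizedCombination_modeOneFamily (hφ : ContDiff ℝ ∞ φ)
    (c : Fin 3 ⊕ Fin 3 → ℝ) : ContMDiff (𝓡 2) 𝓘(ℝ, ℝ³) (⊤ : ℕ∞)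
      (localizedCombination (φ ∘ (↑)) (fun j (x : UnitSphere) => modeOneFamily j x) c) := by
  have : localizedCombination (φ ∘ (↑)) (fun j (x : UnitSphere) => modeOneFamily j x) c =
      (fun y => φ y • ∑ j, c j • modeOneFamily j y) ∘ (↑) :=
    funext fun x => localizedCombination_apply c x
  rw [this]
  exact (hφ.smul (ContDiff.sum fun j _ => (contDiff_modeOneFamily j).const_smul (c j))
    ).contMDiff.comp contMDiff_coe_sphere

theorem inner_localizedCombination_modeOneFamily_self (c : Fin 3 ⊕ Fin 3 → ℝ) (x : UnitSphere) :
    inner ℝ (localizedCombination (φ ∘ (↑)) (fun j (x : UnitSphere) => modeOneFamily j x) c x)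
      (x : ℝ³) = 0 := by
  rw [localizedCombination_apply, real_inner_smul_left, sum_smul_modeOneFamily,
    inner_modeOneField_self _ _ (norm_eq_of_mem_sphere x), mul_zero]

end UnitSphere

/-- (Observation (2) of §6.2: localized tangent vector fields with
prescribed electric and magnetic mode-1 moments.) For every nonempty open subset
`U ⊆ S²` there exist a constant `C > 0` and a linear map `Ψ : ℝ⁶ → (S² → ℝ³)` such
that for every `(α, β) ∈ ℝ³ × ℝ³` the field `X := Ψ (α, β)` is a smooth tangent
vector field on `S²`, has support contained in `U`, satisfies
`∫ ⟨X, Eₘ⟩ dσ = αₘ` and `∫ ⟨X, Hₘ⟩ dσ = βₘ` for `m = 1, 2, 3`, and is bounded by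
`sup ‖X‖ ≤ C · maxₘ (|αₘ|, |βₘ|)`. -/
theorem localized_tangent_field_with_prescribed_mode_one_moments
    (U : Set UnitSphere) (hUopen : IsOpen U) (hUne : U.Nonempty) :
    ∃ (C : ℝ)
      (Ψ : ((Fin 3 → ℝ) × (Fin 3 → ℝ)) →ₗ[ℝ]
            (UnitSphere → EuclideanSpace ℝ (Fin 3))), 0 < C ∧
      ∀ p : (Fin 3 → ℝ) × (Fin 3 → ℝ),
        -- `X := Ψ p` is smooth on the sphere,
        ContMDiff (𝓡 2) 𝓘(ℝ, EuclideanSpace ℝ (Fin 3)) (⊤ : ℕ∞) (Ψ p) ∧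
        -- is tangent to the sphere,
        (∀ x : UnitSphere, (inner ℝ (Ψ p x) (x : EuclideanSpace ℝ (Fin 3)) : ℝ) = 0) ∧
        -- has (closed) support contained in `U`,
        tsupport (Ψ p) ⊆ U ∧
        -- has prescribed electric mode-1 moments `αₘ`,
        (∀ m : Fin 3,
          (∫ x, (inner ℝ (Ψ p x) (Efield m (x : EuclideanSpace ℝ (Fin 3))) : ℝ)
            ∂sphereMeasure) = p.1 m) ∧
        -- has prescribed magnetic mode-1 moments `βₘ`,
        (∀ m : Fin 3,
          (∫ x, (inner ℝ (Ψ p x) (Hfield m (x : EuclideanSpace ℝ (Fin 3))) : ℝ)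
            ∂sphereMeasure) = p.2 m) ∧
        -- and satisfies the sup bound (`‖p‖` is the max of `|α₁|, …, |β₃|`).
        ∀ x : UnitSphere, ‖Ψ p x‖ ≤ C * ‖p‖ := by
  obtain ⟨x₀, hx₀⟩ := hUne
  obtain ⟨φ, hφ, hφ0, hφU, hφx₀⟩ := exists_contDiff_nonneg_tsupport_subset hUopen hx₀
  have hφc : Continuous (φ ∘ (↑) : UnitSphere → ℝ) := hφ.continuous.comp continuous_subtype_val
  let A (j) (x : UnitSphere) : ℝ³ := modeOneFamily j x
  have hA (j) : Continuous (A j) :=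
    (contDiff_modeOneFamily j).continuous.comp continuous_subtype_val
  obtain ⟨L, hL⟩ := exists_linearMap_integral_inner_localizedCombination (μ := sphereMeasure)
    hA hφc (fun x => hφ0 x) fun c hc => eq_zero_of_sum_smul_modeOneFamily_eq_zero
      (infinite_of_mem_nhds x₀ (hφc.isOpen_support.mem_nhds hφx₀)) hc
  let e := LinearEquiv.sumArrowLequivProdArrow (Fin 3) (Fin 3) ℝ ℝ
  let Ψ := localizedCombination (φ ∘ (↑)) A ∘ₗ L ∘ₗ e.symm.toLinearMap
  obtain ⟨C, hC, hΨC⟩ :=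
    Ψ.exists_pos_bound_of_continuous_apply fun p => continuous_localizedCombination hA hφc _
  refine ⟨C, Ψ, hC, fun p => ⟨contMDiff_localizedCombination_modeOneFamily hφ _,
    inner_localizedCombination_modeOneFamily_self _,
    (tsupport_localizedCombination_subset (φ := φ ∘ (↑)) (A := A) _).trans hφU,
    fun m => (hL _ (.inl m)).trans (LinearEquiv.sumArrowLequivProdArrow_symm_apply_inl p.1 p.2 m),
    fun m => (hL _ (.inr m)).trans (LinearEquiv.sumArrowLequivProdArrow_symm_apply_inr p.1 p.2 m),
    hΨC p⟩⟩
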